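/- Let P be an irreducible upward skip-free transition matrix on ℕ. Then P is transient (i.e., G(i,j) < ∞ for all i,j) if and only if ∑_{n=0}^∞ F_n^{(0)} < ∞. -/

import Mathlib

open scoped ENNReal
open Filter Topology

/-- Matrix powers of a nonnegative kernel on ℕ, values in `[0,∞]`. -/
noncomputable def matPow (P : ℕ → ℕ → ℝ≥0∞) : ℕ → ℕ → ℕ → ℝ≥0∞
  | 0, i, j => if i = j then 1 else 0
  | k + 1, i, j => ∑' l : ℕ, matPow P k i l * P l j

/-- A transition matrix on ℕ: rows sum to one. -/
def IsTransitionMatrix (P : ℕ → ℕ → ℝ≥0∞) : Prop :=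
  ∀ i, ∑' j : ℕ, P i j = 1

/-- Irreducibility: every state reaches every state. -/
def MCIrreducible (P : ℕ → ℕ → ℝ≥0∞) : Prop :=
  ∀ i j : ℕ, ∃ k : ℕ, 0 < matPow P k i j

/-- Upward skip-free: `P(i,i+1) > 0` and `P(i,k) = 0` for `k ≥ i+2`. -/
def UpwardSkipFree (P : ℕ → ℕ → ℝ≥0∞) : Prop :=
  (∀ i : ℕ, 0 < P i (i + 1)) ∧ ∀ i k : ℕ, i + 2 ≤ k → P i k = 0

/-- The Green matrix `G(i,j) = ∑_{k=0}^∞ P^k(i,j)`. -/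
noncomputable def green (P : ℕ → ℕ → ℝ≥0∞) (i j : ℕ) : ℝ≥0∞ :=
  ∑' k : ℕ, matPow P k i j

/-- `P_n^{(k-)} = ∑_{i=0}^k P(n,i)`. -/
noncomputable def Pminus (P : ℕ → ℕ → ℝ≥0∞) (n k : ℕ) : ℝ≥0∞ :=
  ∑ l ∈ Finset.range (k + 1), P n l

/-- `F P i n = F_n^{(i)}`: `F_i^{(i)} = 1` and
`F_n^{(i)} = (1/P(n,n+1)) ∑_{k=i}^{n-1} P_n^{(k-)} F_k^{(i)}` for `i < n`. -/
noncomputable def F (P : ℕ → ℕ → ℝ≥0∞) (i : ℕ) : ℕ → ℝ≥0∞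
  | n =>
    if n ≤ i then 1
    else (P n (n + 1))⁻¹ *
      ∑ k ∈ (Finset.Ico i n).attach, Pminus P n k.1 * F P i k.1
  termination_by n => n
  decreasing_by
    have h := Finset.mem_Ico.mp k.2
    omega


/-!
Let `u n = ∑_{k<n} F_k^{(0)}` (`sumF`). Unfolding the recursion for `F` shows that `u` is
`P`-harmonic off `0`, with `u 0 = 0`, `u 1 = 1` and `(P u) 0 = P(0,1)`; that is,
`P u = u + P(0,1) δ₀`. Iterating, `Pⁿ u = u + P(0,1) ∑_{k<n} Pᵏ(·,0)`, so a bound on `u` bounds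
`P(0,1) G(·,0)`, and irreducibility passes finiteness on to all of `G`.

Conversely, if `P` is transient then `u + P(0,1) G(·,0)` is harmonic off `0` and takes the value
`P(0,1) G(0,0)` at both `0` and `1`. For an upward skip-free chain a function harmonic off `0` is
determined by these two values, so it is constant, and `u ≤ P(0,1) G(0,0)`.
-/

open Finset

variable {P : ℕ → ℕ → ℝ≥0∞}

lemma tsum_matPow_zero_mul (v : ℕ → ℝ≥0∞) (i : ℕ) :
    ∑' j, matPow P 0 i j * v j = v i := by
  simp [matPow, ite_mul]

lemma matPow_add (a b i j : ℕ) :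
    matPow P (a + b) i j = ∑' l, matPow P a i l * matPow P b l j := by
  induction b generalizing j with
  | zero => simp [matPow]
  | succ b ih =>
    rw [← add_assoc, matPow]
    simp only [matPow, ih, ← ENNReal.tsum_mul_right, ← ENNReal.tsum_mul_left]
    rw [ENNReal.tsum_comm]
    exact tsum_congr fun _ => tsum_congr fun _ => mul_assoc _ _ _

lemma matPow_one (i j : ℕ) : matPow P 1 i j = P i j :=
  tsum_matPow_zero_mul (P · j) i

lemma matPow_succ' (k i j : ℕ) :
    matPow P (k + 1) i j = ∑' l, P i l * matPow P k l j := by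
  rw [add_comm, matPow_add]
  exact tsum_congr fun l => by rw [matPow_one]

lemma tsum_matPow_succ_mul (v : ℕ → ℝ≥0∞) (n i : ℕ) :
    ∑' j, matPow P (n + 1) i j * v j = ∑' l, matPow P n i l * ∑' j, P l j * v j := by
  simp only [matPow, ← ENNReal.tsum_mul_right, ← ENNReal.tsum_mul_left]
  rw [ENNReal.tsum_comm]
  exact tsum_congr fun _ => tsum_congr fun _ => mul_assoc _ _ _

lemma tsum_matPow_mul_eq_add_sum {v g : ℕ → ℝ≥0∞}
    (hv : ∀ l, ∑' j, P l j * v j = v l + g l) (n i : ℕ) :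
    ∑' j, matPow P n i j * v j = v i + ∑ k ∈ range n, ∑' l, matPow P k i l * g l := by
  induction n with
  | zero => simp [tsum_matPow_zero_mul]
  | succ n ih =>
    simp only [tsum_matPow_succ_mul, hv, mul_add, ENNReal.tsum_add, ih, sum_range_succ, add_assoc]

lemma IsTransitionMatrix.ne_top (hP : IsTransitionMatrix P) (i j : ℕ) : P i j ≠ ∞ :=
  ne_top_of_le_ne_top ENNReal.one_ne_top ((ENNReal.le_tsum j).trans (hP i).le)

lemma IsTransitionMatrix.tsum_mul_const (hP : IsTransitionMatrix P) (c : ℝ≥0∞) (i : ℕ) :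
    ∑' j, P i j * c = c := by
  rw [ENNReal.tsum_mul_right, hP i, one_mul]

lemma IsTransitionMatrix.tsum_matPow_mul_le (hP : IsTransitionMatrix P) {v : ℕ → ℝ≥0∞}
    {M : ℝ≥0∞} (hv : ∀ j, v j ≤ M) (n i : ℕ) :
    ∑' j, matPow P n i j * v j ≤ M := by
  have hM := tsum_matPow_mul_eq_add_sum (g := 0) (fun l => (hP.tsum_mul_const M l).trans
    (add_zero M).symm) n i
  simp only [Pi.zero_apply, mul_zero, tsum_zero, sum_const_zero, add_zero] at hM
  exact hM ▸ ENNReal.tsum_le_tsum fun j => mul_le_mul_right (hv j) _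

lemma green_eq_ite_add_tsum (i j : ℕ) :
    green P i j = (if i = j then 1 else 0) + ∑' l, P i l * green P l j := by
  rw [green, tsum_eq_zero_add' ENNReal.summable]
  simp only [matPow_succ', green, ← ENNReal.tsum_mul_left]
  rw [ENNReal.tsum_comm]
  rfl

lemma green_lt_top_of_forall_green_zero_lt_top (hirr : MCIrreducible P)
    (h : ∀ i, green P i 0 < ∞) (i j : ℕ) : green P i j < ∞ := by
  obtain ⟨m, hm⟩ := hirr j 0
  have hle : green P i j * matPow P m j 0 ≤ green P i 0 :=
    calc green P i j * matPow P m j 0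
        = ∑' n, matPow P n i j * matPow P m j 0 := ENNReal.tsum_mul_right.symm
      _ ≤ ∑' n, matPow P (n + m) i 0 :=
        ENNReal.tsum_le_tsum fun n => (matPow_add n m i 0).symm ▸ ENNReal.le_tsum j
      _ ≤ green P i 0 := ENNReal.tsum_comp_le_tsum_of_injective (add_left_injective m) _
  exact ENNReal.lt_top_of_mul_ne_top_left (hle.trans_lt (h i)).ne hm.ne'

lemma UpwardSkipFree.tsum_mul_eq_sum (hup : UpwardSkipFree P) (v : ℕ → ℝ≥0∞) (n : ℕ) :
    ∑' j, P n j * v j = ∑ j ∈ range (n + 2), P n j * v j :=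
  tsum_eq_sum fun j hj => by rw [hup.2 n j (by simpa using hj), zero_mul]

def IsHarmonicOffZero (P : ℕ → ℕ → ℝ≥0∞) (φ : ℕ → ℝ≥0∞) : Prop :=
  ∀ n, n ≠ 0 → ∑' j, P n j * φ j = φ n

lemma IsTransitionMatrix.isHarmonicOffZero_const (hP : IsTransitionMatrix P) (c : ℝ≥0∞) :
    IsHarmonicOffZero P fun _ => c :=
  fun n _ => hP.tsum_mul_const c n

/-- Harmonicity at `n + 1` expresses `φ (n + 2)` through `φ 0, …, φ (n + 1)`. -/
lemma UpwardSkipFree.eq_of_isHarmonicOffZero (hP : IsTransitionMatrix P)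
    (hup : UpwardSkipFree P) {φ ψ : ℕ → ℝ≥0∞} (hφ : IsHarmonicOffZero P φ)
    (hψ : IsHarmonicOffZero P ψ) (hφ_fin : ∀ n, φ n ≠ ∞) (h₀ : φ 0 = ψ 0) (h₁ : φ 1 = ψ 1) :
    φ = ψ := by
  funext n
  induction n using Nat.strong_induction_on with
  | _ n ih =>
    match n, ih with
    | 0, _ => exact h₀
    | 1, _ => exact h₁
    | n + 2, ih =>
      have hsplit : ∀ χ : ℕ → ℝ≥0∞, IsHarmonicOffZero P χ →
          ∑ j ∈ range (n + 2), P (n + 1) j * χ j + P (n + 1) (n + 2) * χ (n + 2) = χ (n + 1) :=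
        fun χ hχ => by
          rw [← hχ (n + 1) n.succ_ne_zero, hup.tsum_mul_eq_sum, sum_range_succ _ (n + 2)]
      have hlow : ∑ j ∈ range (n + 2), P (n + 1) j * φ j
          = ∑ j ∈ range (n + 2), P (n + 1) j * ψ j :=
        sum_congr rfl fun j hj => by rw [ih j (mem_range.mp hj)]
      have hlow_fin : ∑ j ∈ range (n + 2), P (n + 1) j * φ j ≠ ∞ :=
        ne_top_of_le_ne_top (hφ_fin (n + 1)) (hsplit φ hφ ▸ le_self_add)
      have hstep := (hsplit φ hφ).trans ((ih (n + 1) (by omega)).trans (hsplit ψ hψ).symm)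
      rw [hlow] at hstep hlow_fin
      exact (ENNReal.mul_right_inj (hup.1 _).ne'
        (hP.ne_top _ _)).mp
        ((ENNReal.add_right_inj hlow_fin).mp hstep)

lemma F_zero_zero : F P 0 0 = 1 := by
  rw [F]; simp

lemma mul_F_zero_of_ne_zero (hP : IsTransitionMatrix P) (hup : UpwardSkipFree P) {n : ℕ}
    (hn : n ≠ 0) :
    P n (n + 1) * F P 0 n = ∑ k ∈ range n, Pminus P n k * F P 0 k := by
  rw [F, if_neg (by omega), ← mul_assoc, ENNReal.mul_inv_cancel (hup.1 n).ne'
    (hP.ne_top _ _), one_mul, range_eq_Ico]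
  exact sum_attach (Ico 0 n) fun k => Pminus P n k * F P 0 k

noncomputable def sumF (P : ℕ → ℕ → ℝ≥0∞) (n : ℕ) : ℝ≥0∞ :=
  ∑ k ∈ range n, F P 0 k

lemma isHarmonicOffZero_sumF (hP : IsTransitionMatrix P) (hup : UpwardSkipFree P) :
    IsHarmonicOffZero P (sumF P) := by
  intro n hn
  have hswap : P n (n + 1) * F P 0 n = ∑ j ∈ range n, P n j * ∑ k ∈ Ico j n, F P 0 k := by
    rw [mul_F_zero_of_ne_zero hP hup hn]
    simp only [Pminus, sum_mul, mul_sum, range_eq_Ico]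
    exact (sum_Ico_Ico_comm 0 n fun j k => P n j * F P 0 k).symm
  have hsumF : ∀ j ∈ range n, sumF P j + ∑ k ∈ Ico j n, F P 0 k = sumF P n :=
    fun j hj => sum_range_add_sum_Ico _ (mem_range.mp hj).le
  calc ∑' j, P n j * sumF P j
      = ∑ j ∈ range n, P n j * sumF P j + P n n * sumF P n
          + P n (n + 1) * (sumF P n + F P 0 n) := by
        rw [hup.tsum_mul_eq_sum, sum_range_succ, sum_range_succ, sumF, sumF, sum_range_succ]
    _ = ∑ j ∈ range n, P n j * (sumF P j + ∑ k ∈ Ico j n, F P 0 k) + P n n * sumF P n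
          + P n (n + 1) * sumF P n := by
        simp only [mul_add, sum_add_distrib, hswap]; ring
    _ = ∑ j ∈ range (n + 2), P n j * sumF P n := by
        rw [sum_congr rfl fun j hj => by rw [hsumF j hj], sum_range_succ, sum_range_succ]
    _ = sumF P n := by rw [← hup.tsum_mul_eq_sum (fun _ => sumF P n), hP.tsum_mul_const]

lemma tsum_mul_sumF_eq_add (hP : IsTransitionMatrix P) (hup : UpwardSkipFree P) (l : ℕ) :
    ∑' j, P l j * sumF P j = sumF P l + if l = 0 then P 0 1 else 0 := by
  rcases eq_or_ne l 0 with rfl | hl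
  · simp [hup.tsum_mul_eq_sum, sum_range_succ, sumF, F_zero_zero]
  · rw [isHarmonicOffZero_sumF hP hup l hl, if_neg hl, add_zero]

lemma mul_green_le_tsum_F (hP : IsTransitionMatrix P) (hup : UpwardSkipFree P) (i : ℕ) :
    P 0 1 * green P i 0 ≤ ∑' n, F P 0 n := by
  have hcol : ∀ k, ∑' l, matPow P k i l * (if l = 0 then P 0 1 else 0) = P 0 1 * matPow P k i 0 :=
    fun k => by simp [mul_ite, mul_comm]
  rw [green, ENNReal.tsum_eq_iSup_nat, ENNReal.mul_iSup]
  refine iSup_le fun n => ?_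
  calc P 0 1 * ∑ k ∈ range n, matPow P k i 0
      ≤ sumF P i + ∑ k ∈ range n, ∑' l, matPow P k i l * (if l = 0 then P 0 1 else 0) := by
        simp only [hcol, mul_sum, le_add_self]
    _ = ∑' j, matPow P n i j * sumF P j :=
        (tsum_matPow_mul_eq_add_sum (tsum_mul_sumF_eq_add hP hup) n i).symm
    _ ≤ ∑' n, F P 0 n := hP.tsum_matPow_mul_le (fun j => ENNReal.sum_le_tsum _) n i

lemma tsum_F_le_mul_green (hP : IsTransitionMatrix P) (hup : UpwardSkipFree P)
    (hG : ∀ n, green P n 0 ≠ ∞) :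
    ∑' n, F P 0 n ≤ P 0 1 * green P 0 0 := by
  have hrow₀ : P 0 0 + P 0 1 = 1 := by
    simpa [hP 0, sum_range_succ] using (hup.tsum_mul_eq_sum (fun _ => 1) 0).symm
  have hgreen₀ : green P 0 0 = 1 + (P 0 0 * green P 0 0 + P 0 1 * green P 1 0) := by
    conv_lhs => rw [green_eq_ite_add_tsum, if_pos rfl, hup.tsum_mul_eq_sum]
    simp [sum_range_succ]
  have hψ : IsHarmonicOffZero P fun n => sumF P n + P 0 1 * green P n 0 := by
    intro n hn
    simp only [mul_add, ENNReal.tsum_add, mul_left_comm (P n _), ENNReal.tsum_mul_left,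
      isHarmonicOffZero_sumF hP hup n hn]
    rw [green_eq_ite_add_tsum n 0, if_neg hn, zero_add]
  have hfin : P 0 1 * green P 0 0 ≠ ∞ :=
    ENNReal.mul_ne_top (hP.ne_top 0 1) (hG 0)
  have hψ₁ : P 0 1 * green P 0 0 = sumF P 1 + P 0 1 * green P 1 0 := by
    refine (ENNReal.add_right_inj (a := P 0 0 * green P 0 0)
      (ENNReal.mul_ne_top (hP.ne_top 0 0) (hG 0))).mp ?_
    rw [← add_mul, hrow₀, one_mul]
    nth_rewrite 1 [hgreen₀]
    simp only [sumF, sum_range_one, F_zero_zero]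
    ring
  have hψ_const := hup.eq_of_isHarmonicOffZero hP (hP.isHarmonicOffZero_const _) hψ
    (fun _ => hfin) (by simp [sumF]) hψ₁
  rw [ENNReal.tsum_eq_iSup_nat]
  exact iSup_le fun n => le_self_add.trans (congrFun hψ_const n).ge

theorem upward_skip_free_transient_iff
    (P : ℕ → ℕ → ℝ≥0∞) (hP : IsTransitionMatrix P) (hirr : MCIrreducible P)
    (hup : UpwardSkipFree P) :
    (∀ i j : ℕ, green P i j < ∞) ↔ ∑' n : ℕ, F P 0 n < ∞ := by
  constructor
  · intro hG
    exact (tsum_F_le_mul_green hP hup fun n => (hG n 0).ne).trans_lt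
      (ENNReal.mul_lt_top (hP.ne_top 0 1).lt_top (hG 0 0))
  · intro hF
    refine green_lt_top_of_forall_green_zero_lt_top hirr fun i => ?_
    exact ENNReal.lt_top_of_mul_ne_top_right ((mul_green_le_tsum_F hP hup i).trans_lt hF).ne
      (hup.1 0).ne'
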